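/- arXiv:2211.14009 — 4 statements merged into one kernel-verified Lean document; each statement's English description precedes it below -/
import Mathlib

section
/- For every node j ∈ {0,…,N}, the SBP residual equals a difference of staggered fluxes between adjacent nodes: R_j = Γ_{(j,j−1)} − Γ_{(j,j+1)}, where the indices j−1 = −1 and j+1 = N+1 refer to the boundary data Γ_{(0,−1)} = g_L and Γ_{(N,N+1)} = g_R. (Proposition 1: the diagonal-norm SBP discretization of a non-conservative balance law can be rewritten in flux-differencing form whenever the volume non-conservative term factors into a local and a symmetric contribution.) -/
/-- **Proposition 1.** The diagonal-norm SBP discretization of a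
non-conservative balance law can be rewritten in flux-differencing form whenever the
volume non-conservative term factors into a local and a symmetric contribution:
for every node `j ∈ {0,…,N}`, the SBP residual equals a difference of staggered
fluxes between adjacent nodes, `R j = Γ (j, j-1) - Γ (j, j+1)`, where indices `-1`
and `N+1` refer to the boundary data `Γ (0,-1) = gL` and `Γ (N, N+1) = gR`. -/
theorem sbp_flux_differencing
    (N d : ℕ) (hN : 1 ≤ N) (hd : 1 ≤ d)
    (S : ℕ → ℕ → ℝ)
    (hS : ∀ j k, j ≤ N → k ≤ N → S j k = - S k j)
    (fs : ℕ → ℕ → Fin d → ℝ)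
    (hfs : ∀ j k, j ≤ N → k ≤ N → fs j k = fs k j)
    (Φloc : ℕ → Fin d → ℝ)
    (Φsym : ℕ → ℕ → Fin d → ℝ)
    (hΦsym : ∀ j k, j ≤ N → k ≤ N → Φsym j k = Φsym k j)
    (gL gR : Fin d → ℝ)
    -- the SBP residual at node j
    (R : ℕ → Fin d → ℝ)
    (hR : ∀ j, j ≤ N →
      R j = -(∑ k ∈ Finset.range (N + 1), S j k • (fs j k + Φloc j * Φsym j k))
        + (if j = 0 then gL else 0) - (if j = N then gR else 0))
    -- the staggered (telescoping) fluxes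
    (Γ : ℤ → ℤ → Fin d → ℝ)
    (hΓL : Γ 0 (-1) = gL)
    (hΓR : Γ (N : ℤ) ((N : ℤ) + 1) = gR)
    (hΓ : ∀ j k : ℤ, 0 ≤ j → j ≤ (N : ℤ) → (k = j - 1 ∨ k = j + 1) →
      0 ≤ min j k → min j k ≤ (N : ℤ) - 1 →
      Γ j k =
        (∑ l ∈ Finset.range ((min j k).toNat + 1),
          ∑ m ∈ Finset.range (N + 1), S l m • fs l m)
        + Φloc j.toNat *
          ∑ l ∈ Finset.range ((min j k).toNat + 1),
            ∑ m ∈ Finset.range (N + 1), S l m • Φsym l m) :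
    ∀ j : ℕ, j ≤ N → R j = Γ (j : ℤ) ((j : ℤ) - 1) - Γ (j : ℤ) ((j : ℤ) + 1) := by
  -- full antisymmetric double sum vanishes
  have hzero : ∀ (F : ℕ → ℕ → Fin d → ℝ), (∀ a b, a ≤ N → b ≤ N → F a b = F b a) →
      ∑ l ∈ Finset.range (N+1), ∑ m ∈ Finset.range (N+1), S l m • F l m = 0 := by
    intro F hF
    have h1 : (∑ l ∈ Finset.range (N+1), ∑ m ∈ Finset.range (N+1), S l m • F l m)
        = -(∑ l ∈ Finset.range (N+1), ∑ m ∈ Finset.range (N+1), S l m • F l m) := by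
      rw [← Finset.sum_neg_distrib]
      rw [Finset.sum_comm]
      apply Finset.sum_congr rfl
      intro a ha
      rw [← Finset.sum_neg_distrib]
      apply Finset.sum_congr rfl
      intro b hb
      have haN : a ≤ N := Nat.lt_succ_iff.mp (Finset.mem_range.mp ha)
      have hbN : b ≤ N := Nat.lt_succ_iff.mp (Finset.mem_range.mp hb)
      calc S b a • F b a = (-S a b) • F a b := by rw [hS b a hbN haN, hF b a hbN haN]
        _ = -(S a b • F a b) := neg_smul _ _
    funext x
    have h2 := congrFun h1 x
    simp only [Pi.neg_apply] at h2
    have : (∑ l ∈ Finset.range (N+1), ∑ m ∈ Finset.range (N+1), S l m • F l m) x = 0 := by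
      linarith
    simpa using this
  -- splitting a row sum
  have hrow : ∀ p, ∑ k ∈ Finset.range (N+1), S p k • (fs p k + Φloc p * Φsym p k)
      = (∑ k ∈ Finset.range (N+1), S p k • fs p k)
        + Φloc p * ∑ k ∈ Finset.range (N+1), S p k • Φsym p k := by
    intro p
    rw [Finset.mul_sum, ← Finset.sum_add_distrib]
    apply Finset.sum_congr rfl
    intro k _
    rw [smul_add, mul_smul_comm]
  have hAfull := hzero fs hfs
  have hBfull := hzero Φsym hΦsym
  intro j hj
  rcases eq_or_ne j 0 with hj0 | hj0
  · subst hj0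
    have hΓ1 := hΓ 0 1 le_rfl (by exact_mod_cast N.cast_nonneg) (Or.inr (by ring))
      (by norm_num) (by omega)
    have hmin : min (0:ℤ) 1 = 0 := by norm_num
    rw [hmin] at hΓ1
    simp only [Int.toNat_zero, zero_add, Finset.sum_range_one] at hΓ1
    push_cast
    rw [hΓL, hΓ1, hR 0 (by omega), hrow 0, if_pos rfl, if_neg (by omega)]
    ring
  · rcases eq_or_ne j N with hjN | hjN
    · subst hjN
      -- now N has been replaced by j everywhere
      have hΓ1 := hΓ (j:ℤ) ((j:ℤ) - 1) (by exact_mod_cast j.cast_nonneg) le_rfl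
        (Or.inl rfl) (by omega) (by omega)
      have hmin : min (j:ℤ) ((j:ℤ) - 1) = (j:ℤ) - 1 := by omega
      have htn : ((j:ℤ) - 1).toNat = j - 1 := by omega
      have hNn : j - 1 + 1 = j := by omega
      rw [hmin, htn, hNn] at hΓ1
      have hA : ∑ l ∈ Finset.range j, ∑ m ∈ Finset.range (j+1), S l m • fs l m
          = -(∑ m ∈ Finset.range (j+1), S j m • fs j m) := by
        rw [Finset.sum_range_succ] at hAfull
        exact eq_neg_of_add_eq_zero_left hAfull
      have hB : ∑ l ∈ Finset.range j, ∑ m ∈ Finset.range (j+1), S l m • Φsym l m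
          = -(∑ m ∈ Finset.range (j+1), S j m • Φsym j m) := by
        rw [Finset.sum_range_succ] at hBfull
        exact eq_neg_of_add_eq_zero_left hBfull
      rw [hΓ1, hΓR, hR j (by omega), hrow j, if_neg (by omega), if_pos rfl, hA, hB]
      simp only [Int.toNat_natCast]
      ring
    · -- interior node: 1 ≤ j ≤ N - 1
      have hj1 : 1 ≤ j := by omega
      have hjN' : j < N := lt_of_le_of_ne hj hjN
      have hΓm := hΓ (j:ℤ) ((j:ℤ) - 1) (by exact_mod_cast j.cast_nonneg)
        (by exact_mod_cast hj) (Or.inl rfl) (by omega) (by omega)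
      have hΓp := hΓ (j:ℤ) ((j:ℤ) + 1) (by exact_mod_cast j.cast_nonneg)
        (by exact_mod_cast hj) (Or.inr rfl) (by omega) (by omega)
      have hminm : min (j:ℤ) ((j:ℤ) - 1) = (j:ℤ) - 1 := by omega
      have htnm : ((j:ℤ) - 1).toNat = j - 1 := by omega
      have hjm : j - 1 + 1 = j := by omega
      rw [hminm, htnm, hjm] at hΓm
      have hminp : min (j:ℤ) ((j:ℤ) + 1) = (j:ℤ) := by omega
      have htnp : ((j:ℤ)).toNat = j := by omega
      rw [hminp, htnp] at hΓp
      rw [hΓm, hΓp, hR j (by omega), hrow j, if_neg hj0, if_neg hjN,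
        Finset.sum_range_succ (fun l => ∑ m ∈ Finset.range (N+1), S l m • fs l m) j,
        Finset.sum_range_succ (fun l => ∑ m ∈ Finset.range (N+1), S l m • Φsym l m) j]
      simp only [Int.toNat_natCast]
      ring
end

section
/- At the right boundary node j = N the flux-differencing formula holds: if S is skew-symmetric and f* and Φ^sym are symmetric in their two node arguments, then Γ_{(N,N−1)} − Γ_{(N,N+1)} = −∑_{m=0}^N S_{Nm} (f*_{(N,m)} + Φ^loc_N ∘ Φ^sym_{(N,m)}) − g_R = R_N. -/
lemma sbp_total_sum_zero (N d : ℕ) (S : ℕ → ℕ → ℝ)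
    (hS : ∀ j k, j ≤ N → k ≤ N → S j k = - S k j)
    (f : ℕ → ℕ → Fin d → ℝ)
    (hf : ∀ j k, j ≤ N → k ≤ N → f j k = f k j) :
    ∑ l ∈ Finset.range (N + 1), ∑ m ∈ Finset.range (N + 1), S l m • f l m = 0 := by
  funext i
  simp only [Finset.sum_apply, Pi.smul_apply, Pi.zero_apply, smul_eq_mul]
  have h : ∑ l ∈ Finset.range (N + 1), ∑ m ∈ Finset.range (N + 1), S l m * f l m i
      = -∑ l ∈ Finset.range (N + 1), ∑ m ∈ Finset.range (N + 1), S l m * f l m i := by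
    nth_rewrite 1 [Finset.sum_comm]
    rw [← Finset.sum_neg_distrib]
    refine Finset.sum_congr rfl fun m hm => ?_
    rw [← Finset.sum_neg_distrib]
    refine Finset.sum_congr rfl fun l hl => ?_
    rw [hS l m (Nat.lt_succ_iff.mp (Finset.mem_range.mp hl))
        (Nat.lt_succ_iff.mp (Finset.mem_range.mp hm)),
      hf l m (Nat.lt_succ_iff.mp (Finset.mem_range.mp hl))
        (Nat.lt_succ_iff.mp (Finset.mem_range.mp hm))]
    ring
  linarith

/-- At the right boundary node `j = N` the flux-differencing formula
holds: if `S` is skew-symmetric and `fs`, `Φsym` are symmetric in their two node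
arguments, then
`Γ (N, N-1) - Γ (N, N+1) = -∑_{m=0}^N S N m • (fs N m + Φloc N ∘ Φsym N m) - gR = R N`. -/
theorem sbp_flux_differencing_right_boundary
    (N d : ℕ) (hN : 1 ≤ N) (hd : 1 ≤ d)
    (S : ℕ → ℕ → ℝ)
    (hS : ∀ j k, j ≤ N → k ≤ N → S j k = - S k j)
    (fs : ℕ → ℕ → Fin d → ℝ)
    (hfs : ∀ j k, j ≤ N → k ≤ N → fs j k = fs k j)
    (Φloc : ℕ → Fin d → ℝ)
    (Φsym : ℕ → ℕ → Fin d → ℝ)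
    (hΦsym : ∀ j k, j ≤ N → k ≤ N → Φsym j k = Φsym k j)
    (gL gR : Fin d → ℝ)
    -- the SBP residual at node j
    (R : ℕ → Fin d → ℝ)
    (hR : ∀ j, j ≤ N →
      R j = -(∑ k ∈ Finset.range (N + 1), S j k • (fs j k + Φloc j * Φsym j k))
        + (if j = 0 then gL else 0) - (if j = N then gR else 0))
    -- the staggered (telescoping) fluxes
    (Γ : ℤ → ℤ → Fin d → ℝ)
    (hΓL : Γ 0 (-1) = gL)
    (hΓR : Γ (N : ℤ) ((N : ℤ) + 1) = gR)
    (hΓ : ∀ j k : ℤ, 0 ≤ j → j ≤ (N : ℤ) → (k = j - 1 ∨ k = j + 1) →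
      0 ≤ min j k → min j k ≤ (N : ℤ) - 1 →
      Γ j k =
        (∑ l ∈ Finset.range ((min j k).toNat + 1),
          ∑ m ∈ Finset.range (N + 1), S l m • fs l m)
        + Φloc j.toNat *
          ∑ l ∈ Finset.range ((min j k).toNat + 1),
            ∑ m ∈ Finset.range (N + 1), S l m • Φsym l m) :
    Γ (N : ℤ) ((N : ℤ) - 1) - Γ (N : ℤ) ((N : ℤ) + 1) =
        -(∑ m ∈ Finset.range (N + 1), S N m • (fs N m + Φloc N * Φsym N m)) - gR ∧
      -(∑ m ∈ Finset.range (N + 1), S N m • (fs N m + Φloc N * Φsym N m)) - gR = R N := by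
  have hmin : min (N : ℤ) ((N : ℤ) - 1) = (N : ℤ) - 1 := by omega
  have hG := hΓ (N : ℤ) ((N : ℤ) - 1) (by positivity) le_rfl (Or.inl rfl)
    (by omega) (by omega)
  rw [hmin] at hG
  have htn : ((N : ℤ) - 1).toNat = N - 1 := by omega
  have htn' : (N : ℤ).toNat = N := by omega
  have hNm : (N - 1) + 1 = N := by omega
  rw [htn, htn', hNm] at hG
  -- partial sums
  have hfsum := sbp_total_sum_zero N d S hS fs hfs
  have hΦsum := sbp_total_sum_zero N d S hS Φsym hΦsym
  have hsplit : ∀ g : ℕ → ℕ → Fin d → ℝ,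
      (∑ l ∈ Finset.range (N + 1), ∑ m ∈ Finset.range (N + 1), S l m • g l m = 0) →
      ∑ l ∈ Finset.range N, ∑ m ∈ Finset.range (N + 1), S l m • g l m
        = -∑ m ∈ Finset.range (N + 1), S N m • g N m := by
    intro g hg
    have := Finset.sum_range_succ
      (fun l => ∑ m ∈ Finset.range (N + 1), S l m • g l m) N
    rw [hg] at this
    linear_combination -this
  rw [hsplit fs hfsum, hsplit Φsym hΦsum] at hG
  have key : Γ (N : ℤ) ((N : ℤ) - 1)
      = -(∑ m ∈ Finset.range (N + 1), S N m • (fs N m + Φloc N * Φsym N m)) := by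
    rw [hG]
    funext i
    simp only [Finset.sum_apply, Pi.smul_apply, Pi.neg_apply, Pi.add_apply, Pi.mul_apply,
      smul_eq_mul, Finset.mul_sum, Finset.sum_neg_distrib, ← Finset.sum_add_distrib]
    rw [Finset.sum_congr rfl fun m _ => (by ring :
      S N m * (fs N m i + Φloc N i * Φsym N m i)
        = S N m * fs N m i + Φloc N i * (S N m * Φsym N m i)),
      Finset.sum_add_distrib, ← Finset.mul_sum]
    ring
  constructor
  · rw [key, hΓR]
  · rw [hR N le_rfl, if_neg (by omega), if_pos rfl]
    funext i
    simp
end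

section
/- The jump of the staggered flux across an interior subcell interface is exactly the non-conservative contribution: for every j ∈ {0,…,N−1}, Γ_{(j,j+1)} − Γ_{(j+1,j)} = (Φ^loc_j − Φ^loc_{j+1}) ∘ ∑_{l=0}^{j} ∑_{m=0}^N S_{lm} Φ^sym_{(l,m)}. In particular the staggered fluxes are in general neither unique nor symmetric at an interface, accounting for the non-conservative nature of the system. -/
/-- The jump of the staggered flux across an interior subcell
interface is exactly the non-conservative contribution: for every `j ∈ {0,…,N-1}`,
`Γ (j, j+1) - Γ (j+1, j) = (Φloc j - Φloc (j+1)) ∘ ∑_{l=0}^j ∑_{m=0}^N S l m • Φsym l m`.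
In particular the staggered fluxes are in general neither unique nor symmetric at an
interface, accounting for the non-conservative nature of the system. -/
theorem staggered_flux_jump_is_nonconservative_contribution
    (N d : ℕ) (hN : 1 ≤ N) (hd : 1 ≤ d)
    (S : ℕ → ℕ → ℝ)
    (fs : ℕ → ℕ → Fin d → ℝ)
    (Φloc : ℕ → Fin d → ℝ)
    (Φsym : ℕ → ℕ → Fin d → ℝ)
    (gL gR : Fin d → ℝ)
    -- the staggered (telescoping) fluxes
    (Γ : ℤ → ℤ → Fin d → ℝ)
    (hΓL : Γ 0 (-1) = gL)
    (hΓR : Γ (N : ℤ) ((N : ℤ) + 1) = gR)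
    (hΓ : ∀ j k : ℤ, 0 ≤ j → j ≤ (N : ℤ) → (k = j - 1 ∨ k = j + 1) →
      0 ≤ min j k → min j k ≤ (N : ℤ) - 1 →
      Γ j k =
        (∑ l ∈ Finset.range ((min j k).toNat + 1),
          ∑ m ∈ Finset.range (N + 1), S l m • fs l m)
        + Φloc j.toNat *
          ∑ l ∈ Finset.range ((min j k).toNat + 1),
            ∑ m ∈ Finset.range (N + 1), S l m • Φsym l m) :
    ∀ j : ℕ, j + 1 ≤ N →
      Γ (j : ℤ) ((j : ℤ) + 1) - Γ ((j : ℤ) + 1) (j : ℤ) =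
        (Φloc j - Φloc (j + 1)) *
          ∑ l ∈ Finset.range (j + 1), ∑ m ∈ Finset.range (N + 1), S l m • Φsym l m := by
  intro j hj
  have hjN : (j : ℤ) ≤ (N : ℤ) := by exact_mod_cast Nat.le_of_succ_le hj
  have h1 := hΓ (j : ℤ) ((j : ℤ) + 1) (by positivity) hjN (Or.inr rfl)
    (by omega) (by omega)
  have h2 := hΓ ((j : ℤ) + 1) (j : ℤ) (by positivity) (by exact_mod_cast hj) (Or.inl (by ring))
    (by omega) (by omega)
  have hmin1 : min (j : ℤ) ((j : ℤ) + 1) = (j : ℤ) := by omega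
  have hmin2 : min ((j : ℤ) + 1) (j : ℤ) = (j : ℤ) := by omega
  rw [hmin1] at h1
  rw [hmin2] at h2
  have ht1 : ((j : ℤ)).toNat = j := Int.toNat_natCast j
  have ht2 : ((j : ℤ) + 1).toNat = j + 1 := by omega
  rw [ht1] at h1 h2
  rw [ht2] at h2
  rw [h1, h2]
  ring
end

section
/- Three-dimensional flux-differencing formula (tensor-product extension of Proposition 1): with nodes (i,j,k) ∈ {0,…,N}³, suppose in each reference direction e ∈ {1,2,3} the volume non-conservative two-point term factors into a local and a symmetric contribution (e.g., in the second direction Φ̃^{2⋆}_{i(j,m)k} = Φ^{2,loc}_{ijk} ∘ Φ^{2,sym}_{i(j,m)k} with Φ^{2,sym}_{i(j,m)k} = Φ^{2,sym}_{i(m,j)k}, and analogously in directions 1 and 3). Define, per grid line and direction, staggered fluxes exactly as in the 1D construction: Γ²_{i(0,−1)k} equal to the left face boundary data, Γ²_{i(N,N+1)k} equal to the right face boundary data, and Γ²_{i(j,m)k} := ∑_{l=0}^{min(j,m)} ∑_{n=0}^N S_{ln} f̃^{2*}_{i(l,n)k} + Φ^{2,loc}_{ijk} ∘ ∑_{l=0}^{min(j,m)}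 ∑_{n=0}^N S_{ln} Φ^{2,sym}_{i(l,n)k} for j ∈ {0,…,N}, m ∈ {j−1,j+1}. Then the 3D SBP residual satisfies, at every node (i,j,k): J_{ijk} u̇_{ijk} = (1/ω_i)(Γ¹_{(i,i−1)jk} − Γ¹_{(i,i+1)jk}) + (1/ω_j)(Γ²_{i(j,j−1)k} − Γ²_{i(j,j+1)k}) + (1/ω_k)(Γ³_{ij(k,k−1)} − Γ³_{ij(k,k+1)}). -/
lemma sbp_oned_aux (N d : ℕ) (hN : 1 ≤ N)
    (S : ℕ → ℕ → ℝ)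
    (hS : ∀ l n, l ≤ N → n ≤ N → S l n = - S n l)
    (f : ℕ → ℕ → Fin d → ℝ) (hf : ∀ l n, l ≤ N → n ≤ N → f l n = f n l)
    (Φloc : ℕ → Fin d → ℝ)
    (Φsym : ℕ → ℕ → Fin d → ℝ) (hΦ : ∀ l n, l ≤ N → n ≤ N → Φsym l n = Φsym n l)
    (gL gR : Fin d → ℝ) (Γ : ℤ → ℤ → Fin d → ℝ)
    (hΓL : Γ 0 (-1) = gL) (hΓR : Γ (N : ℤ) ((N : ℤ) + 1) = gR)
    (hΓ : ∀ (a b : ℤ), 0 ≤ a → a ≤ (N : ℤ) → (b = a - 1 ∨ b = a + 1) →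
      0 ≤ min a b → min a b ≤ (N : ℤ) - 1 →
      Γ a b =
        (∑ l ∈ Finset.range ((min a b).toNat + 1),
          ∑ n ∈ Finset.range (N + 1), S l n • f l n)
        + Φloc a.toNat *
          ∑ l ∈ Finset.range ((min a b).toNat + 1),
            ∑ n ∈ Finset.range (N + 1), S l n • Φsym l n)
    (i : ℕ) (hi : i ≤ N) :
    Γ (i : ℤ) ((i : ℤ) - 1) - Γ (i : ℤ) ((i : ℤ) + 1) =
      -(∑ m ∈ Finset.range (N + 1), S i m • (f i m + Φloc i * Φsym i m)
        + (if i = N then gR else 0) - (if i = 0 then gL else 0)) := by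
  have hb : ∀ {m : ℕ}, m ∈ Finset.range (N+1) → m ≤ N :=
    fun hm => Nat.lt_succ_iff.mp (Finset.mem_range.mp hm)
  have hzero : ∀ (h : ℕ → ℕ → Fin d → ℝ), (∀ l n, l ≤ N → n ≤ N → h l n = h n l) →
      (∑ l ∈ Finset.range (N+1), ∑ n ∈ Finset.range (N+1), S l n • h l n) = 0 := by
    intro h hh
    have h2 : ∑ l ∈ Finset.range (N+1), ∑ n ∈ Finset.range (N+1), S l n • h l n
        = -∑ l ∈ Finset.range (N+1), ∑ n ∈ Finset.range (N+1), S l n • h l n := by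
      conv_lhs => rw [Finset.sum_comm]
      rw [show -∑ l ∈ Finset.range (N+1), ∑ n ∈ Finset.range (N+1), S l n • h l n
          = ∑ l ∈ Finset.range (N+1), ∑ n ∈ Finset.range (N+1), -(S l n • h l n) by
        simp [Finset.sum_neg_distrib]]
      refine Finset.sum_congr rfl fun l hl => Finset.sum_congr rfl fun n hn => ?_
      rw [hS n l (hb hn) (hb hl), hh n l (hb hn) (hb hl), neg_smul]
    have h3 : (2:ℝ) • ∑ l ∈ Finset.range (N+1), ∑ n ∈ Finset.range (N+1), S l n • h l n = 0 := by
      rw [two_smul]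
      nth_rewrite 2 [h2]
      simp
    exact (smul_eq_zero.mp h3).resolve_left (by norm_num)
  have expand : ∑ m ∈ Finset.range (N+1), S i m • (f i m + Φloc i * Φsym i m)
      = (∑ m ∈ Finset.range (N+1), S i m • f i m)
        + Φloc i * ∑ m ∈ Finset.range (N+1), S i m • Φsym i m := by
    rw [Finset.mul_sum, ← Finset.sum_add_distrib]
    exact Finset.sum_congr rfl fun m _ => by rw [smul_add, mul_smul_comm]
  rcases Nat.eq_zero_or_pos i with h0 | h0
  · subst h0
    have hL : Γ (0:ℤ) ((0:ℤ) - 1) = gL := by norm_num [hΓL]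
    have hR : Γ (0:ℤ) ((0:ℤ) + 1) =
        (∑ n ∈ Finset.range (N+1), S 0 n • f 0 n)
        + Φloc 0 * ∑ n ∈ Finset.range (N+1), S 0 n • Φsym 0 n := by
      rw [hΓ 0 ((0:ℤ)+1) le_rfl (by exact_mod_cast Nat.zero_le N) (Or.inr rfl)
        (by norm_num) (by omega)]
      norm_num [Finset.sum_range_one]
    simp only [Nat.cast_zero]
    rw [hL, hR, expand, if_neg (show ¬(0 = N) by omega)]
    norm_num
  · rcases eq_or_lt_of_le hi with hiN | hiN
    · subst hiN
      have e1 : (min (i:ℤ) ((i:ℤ) - 1)).toNat + 1 = i := by omega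
      have e2 : ((i:ℤ)).toNat = i := by omega
      have hL : Γ (i:ℤ) ((i:ℤ) - 1) =
          (∑ l ∈ Finset.range i, ∑ n ∈ Finset.range (i+1), S l n • f l n)
          + Φloc i * ∑ l ∈ Finset.range i, ∑ n ∈ Finset.range (i+1), S l n • Φsym l n := by
        rw [hΓ (i:ℤ) ((i:ℤ) - 1) (by omega) (by omega) (Or.inl rfl) (by omega) (by omega),
          e1, e2]
      have hR : Γ (i:ℤ) ((i:ℤ) + 1) = gR := hΓR
      have hf0 := hzero f hf
      have hΦ0 := hzero Φsym hΦ
      rw [Finset.sum_range_succ] at hf0 hΦ0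
      have hf1 : ∑ l ∈ Finset.range i, ∑ n ∈ Finset.range (i+1), S l n • f l n
          = -∑ n ∈ Finset.range (i+1), S i n • f i n := by
        rw [eq_neg_iff_add_eq_zero]; exact hf0
      have hΦ1 : ∑ l ∈ Finset.range i, ∑ n ∈ Finset.range (i+1), S l n • Φsym l n
          = -∑ n ∈ Finset.range (i+1), S i n • Φsym i n := by
        rw [eq_neg_iff_add_eq_zero]; exact hΦ0
      rw [hL, hR, expand, hf1, hΦ1, if_pos (rfl : i = i), if_neg (show ¬(i = 0) by omega), mul_neg]
      abel
    · have e1 : (min (i:ℤ) ((i:ℤ) - 1)).toNat + 1 = i := by omega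
      have e2 : (min (i:ℤ) ((i:ℤ) + 1)).toNat + 1 = i + 1 := by omega
      have e3 : ((i:ℤ)).toNat = i := by omega
      have hL : Γ (i:ℤ) ((i:ℤ) - 1) =
          (∑ l ∈ Finset.range i, ∑ n ∈ Finset.range (N+1), S l n • f l n)
          + Φloc i * ∑ l ∈ Finset.range i, ∑ n ∈ Finset.range (N+1), S l n • Φsym l n := by
        rw [hΓ (i:ℤ) ((i:ℤ) - 1) (by omega) (by omega) (Or.inl rfl) (by omega) (by omega),
          e1, e3]
      have hR : Γ (i:ℤ) ((i:ℤ) + 1) =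
          (∑ l ∈ Finset.range (i+1), ∑ n ∈ Finset.range (N+1), S l n • f l n)
          + Φloc i * ∑ l ∈ Finset.range (i+1), ∑ n ∈ Finset.range (N+1), S l n • Φsym l n := by
        rw [hΓ (i:ℤ) ((i:ℤ) + 1) (by omega) (by omega) (Or.inr rfl) (by omega) (by omega),
          e2, e3]
      rw [hL, hR, expand, if_neg (show ¬(i = N) by omega), if_neg (show ¬(i = 0) by omega),
        Finset.sum_range_succ (fun l => ∑ n ∈ Finset.range (N+1), S l n • f l n),
        Finset.sum_range_succ (fun l => ∑ n ∈ Finset.range (N+1), S l n • Φsym l n),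
        mul_add]
      abel



/-- Three-dimensional flux-differencing formula (tensor-product
extension of Proposition 1): with nodes `(i,j,k) ∈ {0,…,N}³`, suppose in each
reference direction the volume non-conservative two-point term factors into a local
and a symmetric contribution. Define, per grid line and direction, staggered fluxes
exactly as in the 1D construction. Then the 3D SBP residual satisfies, at every node,
`J i j k • u̇ i j k = (1/ωᵢ)(Γ¹ (i,i-1) j k - Γ¹ (i,i+1) j k)
  + (1/ωⱼ)(Γ² i (j,j-1) k - Γ² i (j,j+1) k) + (1/ωₖ)(Γ³ i j (k,k-1) - Γ³ i j (k,k+1))`. -/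
theorem sbp_flux_differencing_3d
    (N d : ℕ) (hN : 1 ≤ N) (hd : 1 ≤ d)
    -- quadrature weights and Jacobian determinants
    (ω : ℕ → ℝ) (hω : ∀ i, i ≤ N → 0 < ω i)
    (Jm : ℕ → ℕ → ℕ → ℝ) (hJm : ∀ i j k, i ≤ N → j ≤ N → k ≤ N → 0 < Jm i j k)
    -- skew-symmetric volume operator
    (S : ℕ → ℕ → ℝ)
    (hS : ∀ l n, l ≤ N → n ≤ N → S l n = - S n l)
    -- two-point volume fluxes, symmetric in their two varying node indices
    (f1 : ℕ → ℕ → ℕ → ℕ → Fin d → ℝ)  -- f1 i m j k = f̃¹*_{(i,m)jk}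
    (hf1 : ∀ i m j k, i ≤ N → m ≤ N → j ≤ N → k ≤ N → f1 i m j k = f1 m i j k)
    (f2 : ℕ → ℕ → ℕ → ℕ → Fin d → ℝ)  -- f2 i j m k = f̃²*_{i(j,m)k}
    (hf2 : ∀ i j m k, i ≤ N → j ≤ N → m ≤ N → k ≤ N → f2 i j m k = f2 i m j k)
    (f3 : ℕ → ℕ → ℕ → ℕ → Fin d → ℝ)  -- f3 i j k m = f̃³*_{ij(k,m)}
    (hf3 : ∀ i j k m, i ≤ N → j ≤ N → k ≤ N → m ≤ N → f3 i j k m = f3 i j m k)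
    -- local and symmetric factors of the non-conservative two-point terms
    (Φloc1 Φloc2 Φloc3 : ℕ → ℕ → ℕ → Fin d → ℝ)
    (Φsym1 : ℕ → ℕ → ℕ → ℕ → Fin d → ℝ)  -- Φsym1 i m j k = Φ^{1,sym}_{(i,m)jk}
    (hΦ1 : ∀ i m j k, i ≤ N → m ≤ N → j ≤ N → k ≤ N → Φsym1 i m j k = Φsym1 m i j k)
    (Φsym2 : ℕ → ℕ → ℕ → ℕ → Fin d → ℝ)  -- Φsym2 i j m k = Φ^{2,sym}_{i(j,m)k}
    (hΦ2 : ∀ i j m k, i ≤ N → j ≤ N → m ≤ N → k ≤ N → Φsym2 i j m k = Φsym2 i m j k)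
    (Φsym3 : ℕ → ℕ → ℕ → ℕ → Fin d → ℝ)  -- Φsym3 i j k m = Φ^{3,sym}_{ij(k,m)}
    (hΦ3 : ∀ i j k m, i ≤ N → j ≤ N → k ≤ N → m ≤ N → Φsym3 i j k m = Φsym3 i j m k)
    -- boundary data (surface flux plus surface non-conservative term) per face
    (g1L g1R g2L g2R g3L g3R : ℕ → ℕ → Fin d → ℝ)
    -- the 3D SBP residual
    (udot : ℕ → ℕ → ℕ → Fin d → ℝ)
    (hud : ∀ i j k, i ≤ N → j ≤ N → k ≤ N →
      (Jm i j k * (ω i * ω j * ω k)) • udot i j k =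
        -((ω j * ω k) •
          (∑ m ∈ Finset.range (N + 1),
              S i m • (f1 i m j k + Φloc1 i j k * Φsym1 i m j k)
            + (if i = N then g1R j k else 0) - (if i = 0 then g1L j k else 0)))
        - ((ω i * ω k) •
          (∑ m ∈ Finset.range (N + 1),
              S j m • (f2 i j m k + Φloc2 i j k * Φsym2 i j m k)
            + (if j = N then g2R i k else 0) - (if j = 0 then g2L i k else 0)))
        - ((ω i * ω j) •
          (∑ m ∈ Finset.range (N + 1),
              S k m • (f3 i j k m + Φloc3 i j k * Φsym3 i j k m)
            + (if k = N then g3R i j else 0) - (if k = 0 then g3L i j else 0))))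
    -- staggered fluxes in the first reference direction
    (Γ1 : ℤ → ℤ → ℕ → ℕ → Fin d → ℝ)
    (hΓ1L : ∀ j k, j ≤ N → k ≤ N → Γ1 0 (-1) j k = g1L j k)
    (hΓ1R : ∀ j k, j ≤ N → k ≤ N → Γ1 (N : ℤ) ((N : ℤ) + 1) j k = g1R j k)
    (hΓ1 : ∀ (a b : ℤ) (j k : ℕ), 0 ≤ a → a ≤ (N : ℤ) → (b = a - 1 ∨ b = a + 1) →
      0 ≤ min a b → min a b ≤ (N : ℤ) - 1 → j ≤ N → k ≤ N →
      Γ1 a b j k =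
        (∑ l ∈ Finset.range ((min a b).toNat + 1),
          ∑ n ∈ Finset.range (N + 1), S l n • f1 l n j k)
        + Φloc1 a.toNat j k *
          ∑ l ∈ Finset.range ((min a b).toNat + 1),
            ∑ n ∈ Finset.range (N + 1), S l n • Φsym1 l n j k)
    -- staggered fluxes in the second reference direction
    (Γ2 : ℕ → ℤ → ℤ → ℕ → Fin d → ℝ)
    (hΓ2L : ∀ i k, i ≤ N → k ≤ N → Γ2 i 0 (-1) k = g2L i k)
    (hΓ2R : ∀ i k, i ≤ N → k ≤ N → Γ2 i (N : ℤ) ((N : ℤ) + 1) k = g2R i k)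
    (hΓ2 : ∀ (i : ℕ) (a b : ℤ) (k : ℕ), 0 ≤ a → a ≤ (N : ℤ) → (b = a - 1 ∨ b = a + 1) →
      0 ≤ min a b → min a b ≤ (N : ℤ) - 1 → i ≤ N → k ≤ N →
      Γ2 i a b k =
        (∑ l ∈ Finset.range ((min a b).toNat + 1),
          ∑ n ∈ Finset.range (N + 1), S l n • f2 i l n k)
        + Φloc2 i a.toNat k *
          ∑ l ∈ Finset.range ((min a b).toNat + 1),
            ∑ n ∈ Finset.range (N + 1), S l n • Φsym2 i l n k)
    -- staggered fluxes in the third reference direction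
    (Γ3 : ℕ → ℕ → ℤ → ℤ → Fin d → ℝ)
    (hΓ3L : ∀ i j, i ≤ N → j ≤ N → Γ3 i j 0 (-1) = g3L i j)
    (hΓ3R : ∀ i j, i ≤ N → j ≤ N → Γ3 i j (N : ℤ) ((N : ℤ) + 1) = g3R i j)
    (hΓ3 : ∀ (i j : ℕ) (a b : ℤ), 0 ≤ a → a ≤ (N : ℤ) → (b = a - 1 ∨ b = a + 1) →
      0 ≤ min a b → min a b ≤ (N : ℤ) - 1 → i ≤ N → j ≤ N →
      Γ3 i j a b =
        (∑ l ∈ Finset.range ((min a b).toNat + 1),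
          ∑ n ∈ Finset.range (N + 1), S l n • f3 i j l n)
        + Φloc3 i j a.toNat *
          ∑ l ∈ Finset.range ((min a b).toNat + 1),
            ∑ n ∈ Finset.range (N + 1), S l n • Φsym3 i j l n) :
    ∀ i j k, i ≤ N → j ≤ N → k ≤ N →
      Jm i j k • udot i j k =
        (ω i)⁻¹ • (Γ1 (i : ℤ) ((i : ℤ) - 1) j k - Γ1 (i : ℤ) ((i : ℤ) + 1) j k)
        + (ω j)⁻¹ • (Γ2 i ((j : ℤ)) ((j : ℤ) - 1) k - Γ2 i ((j : ℤ)) ((j : ℤ) + 1) k)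
        + (ω k)⁻¹ • (Γ3 i j ((k : ℤ)) ((k : ℤ) - 1) - Γ3 i j ((k : ℤ)) ((k : ℤ) + 1)) := by
  intro i j k hi hj hk
  have hωi := (hω i hi).ne'
  have hωj := (hω j hj).ne'
  have hωk := (hω k hk).ne'
  have hD1 : Γ1 (i : ℤ) ((i : ℤ) - 1) j k - Γ1 (i : ℤ) ((i : ℤ) + 1) j k =
      -(∑ m ∈ Finset.range (N + 1), S i m • (f1 i m j k + Φloc1 i j k * Φsym1 i m j k)
        + (if i = N then g1R j k else 0) - (if i = 0 then g1L j k else 0)) :=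
    sbp_oned_aux N d hN S hS (fun l n => f1 l n j k)
      (fun l n hl hn => hf1 l n j k hl hn hj hk) (fun a => Φloc1 a j k)
      (fun l n => Φsym1 l n j k) (fun l n hl hn => hΦ1 l n j k hl hn hj hk)
      (g1L j k) (g1R j k) (fun a b => Γ1 a b j k) (hΓ1L j k hj hk) (hΓ1R j k hj hk)
      (fun a b ha haN hab h1 h2 => hΓ1 a b j k ha haN hab h1 h2 hj hk) i hi
  have hD2 : Γ2 i (j : ℤ) ((j : ℤ) - 1) k - Γ2 i (j : ℤ) ((j : ℤ) + 1) k =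
      -(∑ m ∈ Finset.range (N + 1), S j m • (f2 i j m k + Φloc2 i j k * Φsym2 i j m k)
        + (if j = N then g2R i k else 0) - (if j = 0 then g2L i k else 0)) :=
    sbp_oned_aux N d hN S hS (fun l n => f2 i l n k)
      (fun l n hl hn => hf2 i l n k hi hl hn hk) (fun a => Φloc2 i a k)
      (fun l n => Φsym2 i l n k) (fun l n hl hn => hΦ2 i l n k hi hl hn hk)
      (g2L i k) (g2R i k) (fun a b => Γ2 i a b k) (hΓ2L i k hi hk) (hΓ2R i k hi hk)
      (fun a b ha haN hab h1 h2 => hΓ2 i a b k ha haN hab h1 h2 hi hk) j hj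
  have hD3 : Γ3 i j (k : ℤ) ((k : ℤ) - 1) - Γ3 i j (k : ℤ) ((k : ℤ) + 1) =
      -(∑ m ∈ Finset.range (N + 1), S k m • (f3 i j k m + Φloc3 i j k * Φsym3 i j k m)
        + (if k = N then g3R i j else 0) - (if k = 0 then g3L i j else 0)) :=
    sbp_oned_aux N d hN S hS (fun l n => f3 i j l n)
      (fun l n hl hn => hf3 i j l n hi hj hl hn) (fun a => Φloc3 i j a)
      (fun l n => Φsym3 i j l n) (fun l n hl hn => hΦ3 i j l n hi hj hl hn)
      (g3L i j) (g3R i j) (fun a b => Γ3 i j a b) (hΓ3L i j hi hj) (hΓ3R i j hi hj)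
      (fun a b ha haN hab h1 h2 => hΓ3 i j a b ha haN hab h1 h2 hi hj) k hk
  have hw : ω i * ω j * ω k ≠ 0 := by
    exact mul_ne_zero (mul_ne_zero hωi hωj) hωk
  apply smul_right_injective (Fin d → ℝ) hw
  show (ω i * ω j * ω k) • (Jm i j k • udot i j k) = (ω i * ω j * ω k) • _
  rw [smul_smul, mul_comm, hud i j k hi hj hk, smul_add, smul_add,
    smul_smul, smul_smul, smul_smul, hD1, hD2, hD3,
    show ω i * ω j * ω k * (ω i)⁻¹ = ω j * ω k by (field_simp; try ring),
    show ω i * ω j * ω k * (ω j)⁻¹ = ω i * ω k by (field_simp; try ring),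
    show ω i * ω j * ω k * (ω k)⁻¹ = ω i * ω j by (field_simp; try ring),
    smul_neg, smul_neg, smul_neg]
  abel
end
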